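/- arXiv:2205.10584 — 5 statements merged into one kernel-verified Lean document; each statement's English description precedes it below -/
import Mathlib

section
/- Let (A, m, k) be a finite-dimensional local Gorenstein k-algebra. A functional f : A → k is a dual generator of A (i.e. A·f = Hom_k(A, k)) if and only if f does not vanish identically on the socle of A. -/
/-- Let `(A, m, k)` be a finite-dimensional local Gorenstein `k`-algebra (socle
one-dimensional).  A functional `f : A → k` is a dual generator of `A` (i.e.
`A · f = Hom_k(A, k)` for the action `(a ∘ f)(b) = f (a * b)`) if and only if `f` does
not vanish identically on the socle `(0 : m)`. -/
theorem dual_generator_iff_nonvanishing_on_socle (k A : Type*) [Field k] [CommRing A]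
    [Algebra k A] [FiniteDimensional k A] [IsLocalRing A]
    (hres : Function.Bijective ((IsLocalRing.residue A).comp (algebraMap k A)))
    (hGor : Module.finrank k
      (Submodule.restrictScalars k (IsLocalRing.maximalIdeal A).annihilator) = 1)
    (f : A →ₗ[k] k) :
    (∀ g : A →ₗ[k] k, ∃ a : A, ∀ b : A, g b = f (a * b)) ↔
      ∃ s ∈ (IsLocalRing.maximalIdeal A).annihilator, f s ≠ 0 := by
  classical
  set m := IsLocalRing.maximalIdeal A with hm
  set Soc := Submodule.restrictScalars k m.annihilator
  constructor
  · intro h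
    -- socle is nonzero: pick a nonzero element
    have hpos : 0 < Module.finrank k Soc := by omega
    have : Nontrivial Soc := Module.nontrivial_of_finrank_pos hpos
    obtain ⟨⟨s, hs⟩, hsne⟩ := exists_ne (0 : Soc)
    have hs0 : s ≠ 0 := by
      intro h0; apply hsne; exact Subtype.ext h0
    -- get a functional not vanishing at s
    have := (Module.forall_dual_apply_eq_zero_iff k s).not.mpr hs0
    push_neg at this
    obtain ⟨g, hg⟩ := this
    obtain ⟨a, ha⟩ := h g
    refine ⟨a * s, ?_, ?_⟩
    · refine Submodule.mem_annihilator.mpr fun t ht => ?_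
      have hst := Submodule.mem_annihilator.mp hs t ht
      simp only [smul_eq_mul] at hst ⊢
      calc a * s * t = a * (s * t) := by ring
        _ = 0 := by rw [hst, mul_zero]
    · rw [← ha s]; exact hg
  · rintro ⟨s, hs, hfs⟩
    -- the multiplication map Φ : A → Dual, a ↦ f (a * ·)
    set Φ : A →ₗ[k] (A →ₗ[k] k) := (LinearMap.llcomp k A A k f).comp (LinearMap.mul k A) with hΦ
    have hΦapp : ∀ a b : A, Φ a b = f (a * b) := fun a b => rfl
    -- m is nilpotent
    haveI : IsArtinian A A := isArtinian_of_tower k inferInstance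
    have hnil : IsNilpotent m := by
      rw [hm, ← IsLocalRing.jacobson_eq_maximalIdeal (⊥ : Ideal A) bot_ne_top]
      exact IsArtinianRing.isNilpotent_jacobson_bot
    obtain ⟨N, hN⟩ := hnil
    -- Φ is injective
    have hinj : Function.Injective Φ := by
      rw [injective_iff_map_eq_zero]
      intro a ha0
      by_contra hane
      have hfa : ∀ b : A, f (a * b) = 0 := by
        intro b; rw [← hΦapp, ha0]; rfl
      -- find socle element in the ideal (a)
      have hQN : ∀ y ∈ m ^ N, y * a = 0 := by
        intro y hy; rw [hN] at hy
        simp only [Ideal.zero_eq_bot, Ideal.mem_bot] at hy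
        rw [hy, zero_mul]
      have hQ0 : ¬ ∀ y ∈ m ^ 0, y * a = 0 := by
        intro hq
        exact hane (by simpa using hq 1 (by simp))
      have hex : ∃ n, ∀ y ∈ m ^ n, y * a = 0 := ⟨N, hQN⟩
      set n := Nat.find hex with hn
      have hQn : ∀ y ∈ m ^ n, y * a = 0 := Nat.find_spec hex
      have hn1 : n ≠ 0 := by
        intro h0; apply hQ0; rw [← h0]; exact hQn
      have hQn1 : ¬ ∀ y ∈ m ^ (n - 1), y * a = 0 :=
        Nat.find_min hex (by omega)
      push_neg at hQn1
      obtain ⟨y, hy, hya⟩ := hQn1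
      -- y * a is a nonzero socle element
      have hyaSoc : y * a ∈ m.annihilator := by
        rw [Submodule.mem_annihilator]
        intro t ht
        have hty : y * t ∈ m ^ n := by
          have : m ^ n = m ^ (n - 1) * m := by
            rw [← pow_succ]; congr 1; omega
          rw [this]
          exact Ideal.mul_mem_mul hy ht
        have := hQn (y * t) hty
        simp only [smul_eq_mul]
        calc (y * a) * t = (y * t) * a := by ring
          _ = 0 := this
      -- since socle is 1-dimensional, s is a multiple of y * a
      have hv : (⟨y * a, hyaSoc⟩ : Soc) ≠ 0 := by
        intro h0
        exact hya (congrArg Subtype.val h0)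
      have hspan := (finrank_eq_one_iff_of_nonzero (⟨y * a, hyaSoc⟩ : Soc) hv).mp hGor
      have hsmem : (⟨s, hs⟩ : Soc) ∈ Submodule.span k {(⟨y * a, hyaSoc⟩ : Soc)} := by
        rw [hspan]; trivial
      rw [Submodule.mem_span_singleton] at hsmem
      obtain ⟨c, hc⟩ := hsmem
      have hcA : s = c • (y * a) := by
        have := congrArg Subtype.val hc
        simpa using this.symm
      apply hfs
      rw [hcA, map_smul]
      have : f (y * a) = 0 := by rw [mul_comm]; exact hfa y
      rw [this, smul_zero]
    -- hence surjective by dimension count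
    have hdim : Module.finrank k A = Module.finrank k (A →ₗ[k] k) :=
      (Subspace.dual_finrank_eq (K := k) (V := A)).symm
    have hsurj : Function.Surjective Φ :=
      (LinearMap.injective_iff_surjective_of_finrank_eq_finrank hdim).mp hinj
    intro g
    obtain ⟨a, ha⟩ := hsurj g
    exact ⟨a, fun b => by rw [← ha]; rfl⟩
end

section
/- Let (A, m, k) be a finite-dimensional local Gorenstein k-algebra. Then for every i ≥ 0, dim_k (m^i / m^{i+1}) = dim_k ((0 : m^{i+1}) / (0 : m^i)), where (0 : m^j) denotes the annihilator of m^j in A. That is, the Hilbert function of A can be computed from the Loewy filtration. -/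
open IsLocalRing Module

section Aux

variable {k A : Type*} [Field k] [CommRing A] [Algebra k A] [FiniteDimensional k A]

/-- Quotient dimension as a difference. -/
lemma aux_quot_finrank {M : Type*} [AddCommGroup M] [Module k M] [FiniteDimensional k M]
    (S T : Submodule k M) (h : T ≤ S) :
    Module.finrank k (S ⧸ Submodule.comap S.subtype T) =
      Module.finrank k S - Module.finrank k T := by
  have h1 := Submodule.finrank_quotient_add_finrank (Submodule.comap S.subtype T)
  have h2 : Module.finrank k (Submodule.comap S.subtype T) = Module.finrank k T :=
    LinearEquiv.finrank_eq (Submodule.comapSubtypeEquivOfLe h)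
  omega

lemma aux_ann_finrank (e : A ≃ₗ[k] (A →ₗ[k] k)) (he : ∀ a b x : A, e (a * b) x = e a (b * x))
    (J : Ideal A) :
    Module.finrank k (Submodule.restrictScalars k J.annihilator) +
      Module.finrank k (Submodule.restrictScalars k J) = Module.finrank k A := by
  have hmap : Submodule.map (e : A →ₗ[k] (A →ₗ[k] k))
      (Submodule.restrictScalars k J.annihilator) =
      (Submodule.restrictScalars k J).dualAnnihilator := by
    ext f
    simp only [Submodule.mem_map, Submodule.mem_dualAnnihilator,
      Submodule.restrictScalars_mem, LinearEquiv.coe_coe]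
    constructor
    · rintro ⟨a, ha, rfl⟩ w hw
      have : a * w = 0 := by
        have := (Submodule.mem_annihilator.mp ha) w hw
        simpa [smul_eq_mul] using this
      have h1 := he a w 1
      rw [this] at h1
      simpa using h1.symm
    · intro hf
      refine ⟨e.symm f, Submodule.mem_annihilator.mpr fun w hw => ?_, e.apply_symm_apply f⟩
      rw [smul_eq_mul]
      apply e.injective
      rw [map_zero]
      ext x
      rw [he (e.symm f) w x]
      have : e (e.symm f) (w * x) = f (w * x) := by rw [e.apply_symm_apply]
      rw [this, hf (w * x) (Ideal.mul_mem_right x J hw)]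
      simp
  have h1 : Module.finrank k (Submodule.restrictScalars k J.annihilator) =
      Module.finrank k (Submodule.restrictScalars k J).dualAnnihilator := by
    rw [← hmap]
    exact (LinearEquiv.finrank_map_eq e _).symm
  have h2 : Module.finrank k (A ⧸ (Submodule.restrictScalars k J)) =
      Module.finrank k (Submodule.restrictScalars k J).dualAnnihilator :=
    LinearEquiv.finrank_eq (Subspace.quotEquivAnnihilator _)
  have h3 := Submodule.finrank_quotient_add_finrank (Submodule.restrictScalars k J)
  omega

end Aux

/-- For a finite-dimensional local Gorenstein `k`-algebra `(A, m, k)`, the Hilbert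
function can be computed from the Loewy filtration: for every `i ≥ 0`,
`dim_k (m^i / m^{i+1}) = dim_k ((0 : m^{i+1}) / (0 : m^i))`, where `(0 : m^j)` is the
annihilator of `m^j` in `A`. -/
theorem hilbert_function_from_loewy_filtration (k A : Type*) [Field k] [CommRing A]
    [Algebra k A] [FiniteDimensional k A] [IsLocalRing A]
    (hres : Function.Bijective ((IsLocalRing.residue A).comp (algebraMap k A)))
    (hGor : ∃ e : A ≃ₗ[k] (A →ₗ[k] k), ∀ a b x : A, e (a * b) x = e a (b * x))
    (i : ℕ) :
    Module.finrank k
      ((Submodule.restrictScalars k (maximalIdeal A ^ i)) ⧸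
        (Submodule.comap (Submodule.restrictScalars k (maximalIdeal A ^ i)).subtype
          (Submodule.restrictScalars k (maximalIdeal A ^ (i + 1))))) =
    Module.finrank k
      ((Submodule.restrictScalars k ((maximalIdeal A ^ (i + 1)).annihilator)) ⧸
        (Submodule.comap
          (Submodule.restrictScalars k ((maximalIdeal A ^ (i + 1)).annihilator)).subtype
          (Submodule.restrictScalars k ((maximalIdeal A ^ i).annihilator)))) := by
  obtain ⟨e, he⟩ := hGor
  have hle : maximalIdeal A ^ (i + 1) ≤ maximalIdeal A ^ i :=
    Ideal.pow_le_pow_right (Nat.le_succ i)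
  have hle' : (maximalIdeal A ^ i).annihilator ≤ (maximalIdeal A ^ (i + 1)).annihilator :=
    Submodule.annihilator_mono hle
  rw [aux_quot_finrank _ _ hle, aux_quot_finrank _ _ hle']
  have k1 := aux_ann_finrank e he (maximalIdeal A ^ i)
  have k2 := aux_ann_finrank e he (maximalIdeal A ^ (i + 1))
  have m1 : Module.finrank k (Submodule.restrictScalars k (maximalIdeal A ^ (i+1))) ≤
      Module.finrank k (Submodule.restrictScalars k (maximalIdeal A ^ i)) :=
    Submodule.finrank_mono hle
  omega
end

section
/- Let A be a standard graded k-algebra with Hilbert function H(i) = dim_k A_i. If H(i) ≤ i for some i ≥ 1, then H(i) ≥ H(i+1) ≥ H(i+2) ≥ ⋯, i.e. the Hilbert function is nonincreasing from degree i onward. -/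
/-!
Write `A = k[x₁, …, x_r] / I` with the `xᵢ` spanning `A₁`, and fix a monomial order. In each
degree `N`, the monomials of degree `N` that are not leading monomials of elements of `I_N`
(the standard monomials) map to a basis of `A_N`, so `H(N)` counts them. If `u` is a leading
monomial in `I_N` then so is `u xᵢ` in `I_{N+1}`; hence the lower shadow of the standard
monomials of degree `N + 1` consists of standard monomials of degree `N`. Finally, a set `M` of
monomials of degree `m` has a lower shadow of size at least `min |M| m` (split `M` according to
whether a fixed variable divides, and induct). When `H(N) ≤ N` this forces `H(N + 1) ≤ H(N)`,
so the hypothesis `H(N) ≤ N` propagates to all later degrees.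
-/

open Finset

section Shadow

variable {σ : Type*} [DecidableEq σ]

noncomputable def monomialShadow (M : Finset (σ →₀ ℕ)) : Finset (σ →₀ ℕ) :=
  M.biUnion fun u => u.support.image fun i => u - Finsupp.single i 1

theorem mem_monomialShadow {M : Finset (σ →₀ ℕ)} {w : σ →₀ ℕ} :
    w ∈ monomialShadow M ↔ ∃ i, w + Finsupp.single i 1 ∈ M := by
  simp only [monomialShadow, mem_biUnion, mem_image, Finsupp.mem_support_iff]
  constructor
  · rintro ⟨u, hu, i, hi, rfl⟩
    refine ⟨i, ?_⟩
    rwa [tsub_add_cancel_of_le (Finsupp.single_le_iff.2 (Nat.one_le_iff_ne_zero.2 hi))]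
  · rintro ⟨i, hi⟩
    exact ⟨_, hi, i, by simp, add_tsub_cancel_right _ _⟩

theorem monomialShadow_mono {M M' : Finset (σ →₀ ℕ)} (h : M ⊆ M') :
    monomialShadow M ⊆ monomialShadow M' := fun w hw => by
  obtain ⟨i, hi⟩ := mem_monomialShadow.1 hw
  exact mem_monomialShadow.2 ⟨i, h hi⟩

noncomputable def monomialColon (M : Finset (σ →₀ ℕ)) (j : σ) : Finset (σ →₀ ℕ) :=
  (monomialShadow M).filter fun w => w + Finsupp.single j 1 ∈ M

theorem mem_monomialColon {M : Finset (σ →₀ ℕ)} {j : σ} {w : σ →₀ ℕ} :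
    w ∈ monomialColon M j ↔ w + Finsupp.single j 1 ∈ M := by
  rw [monomialColon, mem_filter, and_iff_right_iff_imp]
  exact fun hw => mem_monomialShadow.2 ⟨j, hw⟩

theorem monomialColon_subset_monomialShadow (M : Finset (σ →₀ ℕ)) (j : σ) :
    monomialColon M j ⊆ monomialShadow M :=
  filter_subset _ _

theorem card_monomialColon_le (M : Finset (σ →₀ ℕ)) (j : σ) : #(monomialColon M j) ≤ #M :=
  card_le_card_of_injOn (· + Finsupp.single j 1) (fun _ hw => mem_monomialColon.1 hw)
    (add_left_injective _).injOn

theorem card_le_card_filter_add_card_monomialColon (M : Finset (σ →₀ ℕ)) (j : σ) :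
    #M ≤ #(M.filter fun v => v j = 0) + #(monomialColon M j) := by
  let e := Finsupp.single j 1
  have hcover :
      M ⊆ (M.filter fun v => v j = 0) ∪ (monomialColon M j).map (addRightEmbedding e) := by
    intro v hv
    by_cases hvj : v j = 0
    · exact mem_union_left _ (mem_filter.2 ⟨hv, hvj⟩)
    have hv' : v - e + e = v :=
      tsub_add_cancel_of_le (Finsupp.single_le_iff.2 (Nat.one_le_iff_ne_zero.2 hvj))
    exact mem_union_right _ (mem_map.2 ⟨v - e, mem_monomialColon.2 (hv'.symm ▸ hv), hv'⟩)
  simpa using (card_le_card hcover).trans (card_union_le _ _)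

theorem card_monomialShadow_filter_add_card_monomialShadow_colon_le (M : Finset (σ →₀ ℕ))
    (j : σ) :
    #(monomialShadow (M.filter fun v => v j = 0)) + #(monomialShadow (monomialColon M j)) ≤
      #(monomialShadow M) := by
  let e := Finsupp.single j 1
  -- the first shadow avoids `x_j`; the second one, multiplied by `x_j`, does not
  have hdisj : Disjoint (monomialShadow (M.filter fun v => v j = 0))
      ((monomialShadow (monomialColon M j)).map (addRightEmbedding e)) := by
    refine disjoint_left.2 fun w hw₀ hwN => ?_
    obtain ⟨i, hi⟩ := mem_monomialShadow.1 hw₀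
    obtain ⟨w', -, rfl⟩ := mem_map.1 hwN
    simpa [e] using (mem_filter.1 hi).2
  have hsub : monomialShadow (M.filter fun v => v j = 0) ∪
      (monomialShadow (monomialColon M j)).map (addRightEmbedding e) ⊆ monomialShadow M := by
    refine union_subset (monomialShadow_mono (filter_subset _ _)) fun w hw => ?_
    obtain ⟨w', hw', rfl⟩ := mem_map.1 hw
    obtain ⟨i, hi⟩ := mem_monomialShadow.1 hw'
    exact mem_monomialShadow.2 ⟨i, by simpa [add_right_comm] using mem_monomialColon.1 hi⟩
  simpa [card_union_of_disjoint hdisj] using card_le_card hsub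

theorem min_card_le_card_monomialShadow {M : Finset (σ →₀ ℕ)} {m : ℕ}
    (hM : ∀ u ∈ M, u.degree = m) : min #M m ≤ #(monomialShadow M) := by
  induction hs : m + #M using Nat.strong_induction_on generalizing M m with
  | _ s ih =>
  obtain rfl | ⟨u, hu⟩ := M.eq_empty_or_nonempty
  · simp
  obtain rfl | hm := Nat.eq_zero_or_pos m
  · simp
  obtain ⟨j, hj⟩ : ∃ j, u j ≠ 0 := by
    by_contra! h
    have hdeg := hM u hu
    rw [show u = 0 from Finsupp.ext h, map_zero] at hdeg
    omega
  have hM_le := card_le_card_filter_add_card_monomialColon M j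
  have hsplit := card_monomialShadow_filter_add_card_monomialShadow_colon_le M j
  have hNM := card_monomialColon_le M j
  set M₀ := M.filter fun v => v j = 0
  set N := monomialColon M j
  have hM₀ : #M₀ < #M := card_lt_card (filter_ssubset.2 ⟨u, hu, hj⟩)
  have hdegN : ∀ w ∈ N, w.degree = m - 1 := fun w hw => by
    have := hM _ (mem_monomialColon.1 hw)
    rw [map_add, Finsupp.degree_single] at this
    omega
  have ih₀ : min #M₀ m ≤ #(monomialShadow M₀) :=
    ih (m + #M₀) (by omega) (fun v hv => hM v (mem_filter.1 hv).1) rfl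
  have ihN : min #N (m - 1) ≤ #(monomialShadow N) := ih (m - 1 + #N) (by omega) hdegN rfl
  have hN : #N ≤ #(monomialShadow M) :=
    card_le_card (monomialColon_subset_monomialShadow M j)
  -- if `#M₀ ≥ m` use `hsplit`; if `#N ≥ m` use `hN`; otherwise both minima are cardinalities
  omega

theorem card_le_card_of_monomialShadow_subset {M M' : Finset (σ →₀ ℕ)} {n : ℕ}
    (hM' : ∀ u ∈ M', u.degree = n + 1) (hsub : monomialShadow M' ⊆ M) (hM : #M ≤ n) :
    #M' ≤ #M := by
  have h₁ := min_card_le_card_monomialShadow hM'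
  have h₂ := card_le_card hsub
  omega

end Shadow

open MvPolynomial

namespace MonomialOrder

variable {σ k : Type*} [Field k] (m : MonomialOrder σ)

def leadingMonomials (W : Submodule k (MvPolynomial σ k)) : Set (σ →₀ ℕ) :=
  {u | ∃ f ∈ W, f ≠ 0 ∧ m.degree f = u}

open scoped Classical in
noncomputable def standardMonomials (W : Submodule k (MvPolynomial σ k)) (D : Finset (σ →₀ ℕ)) :
    Finset (σ →₀ ℕ) :=
  {u ∈ D | u ∉ m.leadingMonomials W}

variable {m}

theorem mem_standardMonomials {W : Submodule k (MvPolynomial σ k)} {D : Finset (σ →₀ ℕ)}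
    {u : σ →₀ ℕ} : u ∈ m.standardMonomials W D ↔ u ∈ D ∧ u ∉ m.leadingMonomials W := by
  classical
  simp [standardMonomials]

theorem coe_standardMonomials (W : Submodule k (MvPolynomial σ k)) (D : Finset (σ →₀ ℕ)) :
    (m.standardMonomials W D : Set (σ →₀ ℕ)) = ↑D \ m.leadingMonomials W :=
  Set.ext fun _ => mem_standardMonomials

theorem add_single_mem_leadingMonomials {W W' : Submodule k (MvPolynomial σ k)} {i : σ}
    (hWW' : ∀ f ∈ W, f * X i ∈ W') {u : σ →₀ ℕ} (hu : u ∈ m.leadingMonomials W) :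
    u + Finsupp.single i 1 ∈ m.leadingMonomials W' := by
  obtain ⟨f, hf, hf0, rfl⟩ := hu
  refine ⟨f * X i, hWW' f hf, mul_ne_zero hf0 (X_ne_zero i), ?_⟩
  rw [m.degree_mul hf0 (X_ne_zero i), m.degree_X]

theorem disjoint_restrictSupport_of_disjoint {S : Set (σ →₀ ℕ)}
    {W : Submodule k (MvPolynomial σ k)} (h : Disjoint S (m.leadingMonomials W)) :
    Disjoint (restrictSupport k S) W := by
  rw [Submodule.disjoint_def]
  intro f hfS hfW
  by_contra hf
  exact Set.disjoint_left.1 h (hfS (m.degree_mem_support hf)) ⟨f, hfW, hf, rfl⟩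

theorem support_monomial_degree_sub_smul_subset {f : MvPolynomial σ k} (hf : f ≠ 0) :
    ↑(monomial (m.degree f) 1 - (m.leadingCoeff f)⁻¹ • f).support ⊆
      {v | v ∈ f.support ∧ m.toSyn v < m.toSyn (m.degree f)} := by
  classical
  intro v hv
  have hv : coeff v (monomial (m.degree f) 1 - (m.leadingCoeff f)⁻¹ • f) ≠ 0 :=
    mem_support_iff.1 hv
  have hvf : v ≠ m.degree f := by
    rintro rfl
    apply hv
    rw [coeff_sub, coeff_smul, coeff_monomial, if_pos rfl, smul_eq_mul]
    exact sub_eq_zero.2 (inv_mul_cancel₀ (m.leadingCoeff_ne_zero_iff.2 hf)).symm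
  have hvf' : v ∈ f.support := by
    rw [mem_support_iff]
    contrapose! hv
    rw [coeff_sub, coeff_smul, coeff_monomial, if_neg hvf.symm, hv, smul_zero, sub_zero]
  exact ⟨hvf', lt_of_le_of_ne (m.le_degree hvf') (m.toSyn.injective.ne hvf)⟩

theorem restrictSupport_le_restrictSupport_sdiff_sup {D : Set (σ →₀ ℕ)}
    {W : Submodule k (MvPolynomial σ k)} (hW : W ≤ restrictSupport k D) :
    restrictSupport k D ≤ restrictSupport k (D \ m.leadingMonomials W) ⊔ W := by
  rw [restrictSupport_eq_span, Submodule.span_le]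
  rintro _ ⟨u, hu, rfl⟩
  induction hb : m.toSyn u using WellFoundedLT.induction generalizing u with
  | _ b ih =>
  by_cases hlead : u ∈ m.leadingMonomials W
  · -- subtract from `X^u` a multiple of some `f ∈ W` with leading monomial `u`
    obtain ⟨f, hfW, hf0, rfl⟩ := hlead
    have hlower : restrictSupport k {v | v ∈ D ∧ m.toSyn v < b} ≤
        restrictSupport k (D \ m.leadingMonomials W) ⊔ W := by
      rw [restrictSupport_eq_span, Submodule.span_le]
      rintro _ ⟨v, ⟨hvD, hvb⟩, rfl⟩
      exact ih _ hvb v hvD rfl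
    have hg : monomial (m.degree f) 1 - (m.leadingCoeff f)⁻¹ • f ∈
        restrictSupport k {v | v ∈ D ∧ m.toSyn v < b} := fun v hv => by
      obtain ⟨hvf, hvlt⟩ := support_monomial_degree_sub_smul_subset hf0 hv
      exact ⟨hW hfW hvf, hb ▸ hvlt⟩
    show monomial (m.degree f) (1 : k) ∈ _
    rw [← sub_add_cancel (monomial (m.degree f) (1 : k)) ((m.leadingCoeff f)⁻¹ • f)]
    exact add_mem (hlower hg) (Submodule.mem_sup_right (W.smul_mem _ hfW))
  · exact Submodule.mem_sup_left (by simp [hu, hlead])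

theorem finrank_map_restrictSupport {V : Type*} [AddCommGroup V] [Module k V]
    (ψ : MvPolynomial σ k →ₗ[k] V) (D : Finset (σ →₀ ℕ)) :
    Module.finrank k ((restrictSupport k D).map ψ) =
      #(m.standardMonomials (restrictSupport k D ⊓ LinearMap.ker ψ) D) := by
  set P := restrictSupport k (D : Set (σ →₀ ℕ))
  set W := P ⊓ LinearMap.ker ψ
  set S := restrictSupport k (m.standardMonomials W D : Set (σ →₀ ℕ))
  have hS : S = restrictSupport k (↑D \ m.leadingMonomials W) :=
    congrArg (restrictSupport k) (coe_standardMonomials W D)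
  have hSW : Disjoint S W := hS ▸ disjoint_restrictSupport_of_disjoint Set.disjoint_sdiff_left
  have hSP : S ≤ P := hS ▸ restrictSupport_mono k Set.sdiff_subset
  have hPS : P.map ψ = S.map ψ := by
    refine le_antisymm ?_ (Submodule.map_mono hSP)
    calc P.map ψ ≤ (S ⊔ W).map ψ :=
          Submodule.map_mono (hS ▸ restrictSupport_le_restrictSupport_sdiff_sup inf_le_left)
      _ = S.map ψ := by
        rw [Submodule.map_sup, LinearMap.le_ker_iff_map.1 inf_le_right, sup_bot_eq]
  have hinj : Function.Injective (ψ.domRestrict S) := by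
    rw [LinearMap.injective_domRestrict_iff, Submodule.disjoint_def]
    exact fun f hfS hfψ => Submodule.disjoint_def.1 hSW f hfS ⟨hSP hfS, hfψ⟩
  rw [hPS, ← LinearMap.range_domRestrict, LinearMap.finrank_range_of_inj hinj,
    Module.finrank_eq_card_finset_basis (basisRestrictSupport k _)]

end MonomialOrder

section Graded

variable {k A σ : Type*} [Field k] [CommRing A] [Algebra k A] (𝒜 : ℕ → Submodule k A)
  [GradedAlgebra 𝒜] {x : σ → A}

theorem aeval_mem_of_isHomogeneous (hx : ∀ i, x i ∈ 𝒜 1) {p : MvPolynomial σ k} {N : ℕ}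
    (hp : p.IsHomogeneous N) : aeval x p ∈ 𝒜 N := by
  suffices homogeneousSubmodule σ k N ≤ (𝒜 N).comap (aeval x).toLinearMap from this hp
  rw [homogeneousSubmodule_eq_finsupp_supported, ← restrictSupport, restrictSupport_eq_span,
    Submodule.span_le]
  rintro _ ⟨u, rfl : u.degree = N, rfl⟩
  simpa [aeval_monomial, Finsupp.prod, Finsupp.degree_apply] using
    SetLike.prod_pow_mem_graded 𝒜 (fun _ => 1) x u (F := u.support) fun i _ => hx i

attribute [local instance] MvPolynomial.gradedAlgebra in
theorem map_aeval_homogeneousSubmodule (hx : ∀ i, x i ∈ 𝒜 1)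
    (hsurj : Function.Surjective (aeval (R := k) x)) (N : ℕ) :
    (homogeneousSubmodule σ k N).map (aeval x).toLinearMap = 𝒜 N := by
  refine le_antisymm (Submodule.map_le_iff_le_comap.2 fun p hp =>
    aeval_mem_of_isHomogeneous 𝒜 hx hp) fun a ha => ?_
  obtain ⟨p, rfl⟩ := hsurj a
  let φ : homogeneousSubmodule σ k →+*ᵍ 𝒜 :=
    ⟨(aeval x).toRingHom, fun hp => aeval_mem_of_isHomogeneous 𝒜 hx hp⟩
  have hφp : φ p ∈ 𝒜 N := ha
  -- `φ` is graded, so it commutes with taking degree-`N` components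
  have hcomp := GradedRingHom.map_directSumDecompose _ _ φ (x := p) (i := N)
  rw [DirectSum.decompose_of_mem_same 𝒜 hφp,
    show (DirectSum.decompose (homogeneousSubmodule σ k) p N : MvPolynomial σ k) =
      homogeneousComponent N p from decomposition.decompose'_apply p N] at hcomp
  exact ⟨homogeneousComponent N p, homogeneousComponent_mem N p, hcomp⟩

end Graded

section Degree

variable {σ : Type*} [Finite σ]

noncomputable def monomialsOfDegree (N : ℕ) : Finset (σ →₀ ℕ) :=
  (Finsupp.finite_of_degree_eq N).toFinset

theorem mem_monomialsOfDegree {N : ℕ} {u : σ →₀ ℕ} : u ∈ monomialsOfDegree N ↔ u.degree = N :=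
  Set.Finite.mem_toFinset _

theorem restrictSupport_monomialsOfDegree (k : Type*) [CommSemiring k] (N : ℕ) :
    restrictSupport k ↑(monomialsOfDegree (σ := σ) N) = homogeneousSubmodule σ k N := by
  rw [homogeneousSubmodule_eq_finsupp_supported, monomialsOfDegree, Set.Finite.coe_toFinset]
  rfl

variable {k : Type*} [Field k] [DecidableEq σ] (m : MonomialOrder σ)

theorem MonomialOrder.monomialShadow_standardMonomials_subset
    {W W' : Submodule k (MvPolynomial σ k)} (hWW' : ∀ f ∈ W, ∀ i, f * X i ∈ W') (N : ℕ) :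
    monomialShadow (m.standardMonomials W' (monomialsOfDegree (N + 1))) ⊆
      m.standardMonomials W (monomialsOfDegree N) := by
  intro w hw
  obtain ⟨i, hi⟩ := mem_monomialShadow.1 hw
  rw [m.mem_standardMonomials, mem_monomialsOfDegree, map_add, Finsupp.degree_single] at hi
  rw [m.mem_standardMonomials, mem_monomialsOfDegree]
  exact ⟨by omega, fun hw => hi.2 (m.add_single_mem_leadingMonomials (hWW' · · i) hw)⟩

end Degree

section Macaulay

variable {k A σ : Type*} [Field k] [CommRing A] [Algebra k A] (𝒜 : ℕ → Submodule k A)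
  [GradedAlgebra 𝒜] {x : σ → A}

theorem finrank_succ_le_of_finrank_le [Finite σ] [LinearOrder σ] (hx : ∀ i, x i ∈ 𝒜 1)
    (hsurj : Function.Surjective (aeval (R := k) x)) {n : ℕ}
    (hn : Module.finrank k (𝒜 n) ≤ n) :
    Module.finrank k (𝒜 (n + 1)) ≤ Module.finrank k (𝒜 n) := by
  classical
  let m : MonomialOrder σ := MonomialOrder.lex
  let φ := (aeval (R := k) x).toLinearMap
  let W N := homogeneousSubmodule σ k N ⊓ LinearMap.ker φ
  have hcard N :
      Module.finrank k (𝒜 N) = #(m.standardMonomials (W N) (monomialsOfDegree N)) := by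
    rw [← map_aeval_homogeneousSubmodule 𝒜 hx hsurj, ← restrictSupport_monomialsOfDegree,
      m.finrank_map_restrictSupport, restrictSupport_monomialsOfDegree]
  have hWX : ∀ f ∈ W n, ∀ i, f * X i ∈ W (n + 1) := fun f hf i => by
    have hφf : aeval x f = 0 := hf.2
    exact ⟨hf.1.mul (isHomogeneous_X k i), by simp [φ, hφf]⟩
  rw [hcard] at hn
  rw [hcard, hcard]
  refine card_le_card_of_monomialShadow_subset (fun u hu => ?_)
    (m.monomialShadow_standardMonomials_subset hWX n) hn
  exact mem_monomialsOfDegree.1 (m.mem_standardMonomials.1 hu).1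

theorem exists_fin_surjective_aeval {V : Submodule k A} (hV : V.FG)
    (hgen : Algebra.adjoin k (V : Set A) = ⊤) :
    ∃ (r : ℕ) (x : Fin r → A), (∀ t, x t ∈ V) ∧ Function.Surjective (aeval (R := k) x) := by
  obtain ⟨r, x, hx⟩ := Submodule.fg_iff_exists_fin_generating_family.1 hV
  refine ⟨r, x, fun t => hx ▸ Submodule.subset_span ⟨t, rfl⟩, ?_⟩
  rw [← AlgHom.range_eq_top, ← Algebra.adjoin_range_eq_range_aeval, ← Algebra.adjoin_span, hx,
    hgen]

end Macaulay

theorem hilbert_function_nonincreasing_general (k A : Type*) [Field k] [CommRing A] [Algebra k A]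
    (𝒜 : ℕ → Submodule k A) [GradedAlgebra 𝒜]
    (hfin : ∀ j, FiniteDimensional k (𝒜 j))
    (hstd1 : Algebra.adjoin k (𝒜 1 : Set A) = ⊤)
    (i : ℕ) (hH : Module.finrank k (𝒜 i) ≤ i) :
    ∀ j, i ≤ j → Module.finrank k (𝒜 (j + 1)) ≤ Module.finrank k (𝒜 j) := by
  obtain ⟨r, x, hx, hsurj⟩ :=
    exists_fin_surjective_aeval (Module.Finite.iff_fg.1 (hfin 1)) hstd1
  have step n := finrank_succ_le_of_finrank_le 𝒜 hx hsurj (n := n)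
  have hle : ∀ j, i ≤ j → Module.finrank k (𝒜 j) ≤ j := fun j hj => by
    induction j, hj using Nat.le_induction with
    | base => exact hH
    | succ j _ ih => exact (step j ih).trans (ih.trans j.le_succ)
  exact fun j hj => step j (hle j hj)

/-- (Consequence of Macaulay's growth theorem.)  Let `A` be a standard graded `k`-algebra
(`A_0 = k`, generated in degree one) with Hilbert function `H(i) = dim_k A_i`.  If
`H(i) ≤ i` for some `i ≥ 1`, then `H` is nonincreasing from degree `i` onward:
`H(i) ≥ H(i+1) ≥ H(i+2) ≥ ⋯`. -/
theorem hilbert_function_nonincreasing (k A : Type*) [Field k] [CommRing A] [Algebra k A]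
    (𝒜 : ℕ → Submodule k A) [GradedAlgebra 𝒜]
    (hfin : ∀ j, FiniteDimensional k (𝒜 j))
    (hstd0 : Module.finrank k (𝒜 0) = 1)
    (hstd1 : Algebra.adjoin k (𝒜 1 : Set A) = ⊤)
    (i : ℕ) (hi : 1 ≤ i) (hH : Module.finrank k (𝒜 i) ≤ i) :
    ∀ j, i ≤ j → Module.finrank k (𝒜 (j + 1)) ≤ Module.finrank k (𝒜 j) :=
  hilbert_function_nonincreasing_general k A 𝒜 hfin hstd1 i hH
end

section
/- Let k be an algebraically closed field, S a commutative ring which is a k-algebra, and I ⊆ S[t] an ideal (or k[t]-submodule). Set I_0 = I ∩ S. If for every λ ∈ k one has (t−λ)S[t] ∩ I ⊆ (t−λ)I + I_0·S[t], then S[t]/I is a flat (equivalently, torsion-free) k[t]-module. -/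
/-!
Torsion-freeness over the PID `k[t]` is flatness, and since `k` is algebraically closed it
suffices to cancel the linear factors `t - λ` modulo `I`. If `(t - λ) x ∈ I`, the hypothesis
writes `(t - λ) x = (t - λ) i + j` with `i ∈ I` and `j ∈ I₀[t]`; a monic polynomial is a
nonzerodivisor on `S[t]/I₀[t] ≅ (S/I₀)[t]`, so `x - i ∈ I₀[t] ⊆ I`.
-/

open Polynomial

noncomputable instance polyAlg (k S : Type*) [Field k] [CommRing S] [Algebra k S] :
    Algebra (Polynomial k) (Polynomial S) :=
  (Polynomial.mapRingHom (algebraMap k S)).toAlgebra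

namespace Polynomial

variable {R : Type*} [CommRing R]

theorem mem_map_C_of_monic_mul_mem {J : Ideal R} {p q : R[X]} (hp : p.Monic)
    (h : p * q ∈ J.map C) : q ∈ J.map C := by
  rw [← Ideal.mk_ker (I := J), ← ker_mapRingHom, RingHom.mem_ker] at h ⊢
  rw [map_mul] at h
  exact (hp.map (Ideal.Quotient.mk J)).isRegular.left (by simpa using h)

theorem mem_of_monic_mul_mem {I : Ideal R[X]} {p q : R[X]} (hp : p.Monic)
    (hI : ∀ x ∈ I, p ∣ x → ∃ i ∈ I, ∃ j ∈ (I.comap C).map C, x = p * i + j)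
    (h : p * q ∈ I) : q ∈ I := by
  obtain ⟨i, hi, j, hj, hpq⟩ := hI _ h (dvd_mul_right p q)
  have hqi : q - i ∈ (I.comap C).map C :=
    mem_map_C_of_monic_mul_mem hp (by rwa [mul_sub, hpq, add_sub_cancel_left])
  simpa using I.add_mem hi (Ideal.map_comap_le hqi)

theorem mem_of_multiset_prod_X_sub_C_mul_mem {I : Ideal R[X]} {s : Multiset R}
    (hs : ∀ a ∈ s, ∀ q, (X - C a) * q ∈ I → q ∈ I) {q : R[X]}
    (h : (s.map fun a => X - C a).prod * q ∈ I) : q ∈ I := by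
  induction s using Multiset.induction_on generalizing q with
  | empty => simpa using h
  | cons a s ih =>
    rw [Multiset.map_cons, Multiset.prod_cons, mul_assoc] at h
    exact ih (fun b hb => hs b (Multiset.mem_cons_of_mem hb))
      (hs a (Multiset.mem_cons_self a s) _ h)

end Polynomial

section AlgClosed

variable {k S : Type*} [Field k] [IsAlgClosed k] [CommRing S] [Algebra k S] {I : Ideal S[X]}

theorem mem_of_map_mul_mem
    (hI : ∀ (a : k) (q : S[X]), (X - C (algebraMap k S a)) * q ∈ I → q ∈ I)
    {p : k[X]} (hp : p ≠ 0) {q : S[X]} (h : p.map (algebraMap k S) * q ∈ I) : q ∈ I := by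
  have hsplit := C_leadingCoeff_mul_prod_multiset_X_sub_C
    (IsAlgClosed.card_roots_eq_natDegree (p := p))
  have hmap : (p.roots.map fun a => X - C a).prod.map (algebraMap k S) =
      ((p.roots.map (algebraMap k S)).map fun a => X - C a).prod := by
    simp [Polynomial.map_multiset_prod, Multiset.map_map]
  rw [← hsplit, Polynomial.map_mul, map_C, hmap, mul_assoc] at h
  have hprod : ((p.roots.map (algebraMap k S)).map fun a => X - C a).prod * q ∈ I := by
    simpa [← mul_assoc, ← C_mul, ← map_mul, leadingCoeff_ne_zero.mpr hp]
      using I.mul_mem_left (C (algebraMap k S p.leadingCoeff⁻¹)) h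
  exact Polynomial.mem_of_multiset_prod_X_sub_C_mul_mem
    (fun a ha => by obtain ⟨b, -, rfl⟩ := Multiset.mem_map.mp ha; exact hI b) hprod

theorem isTorsionFree_quotient
    (hI : ∀ (a : k) (q : S[X]), (X - C (algebraMap k S a)) * q ∈ I → q ∈ I) :
    Module.IsTorsionFree k[X] (S[X] ⧸ I) := by
  refine .of_smul_eq_zero fun p m hpm => or_iff_not_imp_left.mpr fun hp => ?_
  obtain ⟨q, rfl⟩ := Ideal.Quotient.mk_surjective m
  change Ideal.Quotient.mk I (p.map (algebraMap k S) * q) = 0 at hpm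
  rw [Ideal.Quotient.eq_zero_iff_mem] at hpm ⊢
  exact mem_of_map_mul_mem hI hp hpm

end AlgClosed

/-- Flatness criterion.  Let `k` be an algebraically closed field, `S` a commutative
`k`-algebra and `I ⊆ S[t]` an ideal with `I₀ = I ∩ S` (the constants lying in `I`).
If for every `λ ∈ k` one has `(t - λ)S[t] ∩ I ⊆ (t - λ)·I + I₀·S[t]`, then `S[t]/I` is a
flat (equivalently torsion-free) `k[t]`-module. -/
theorem flat_of_linear_factor_condition (k S : Type*) [Field k] [IsAlgClosed k]
    [CommRing S] [Algebra k S] (I : Ideal (Polynomial S))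
    (h : ∀ (lam : k) (x : Polynomial S), x ∈ I →
      (X - C (algebraMap k S lam)) ∣ x →
      ∃ i ∈ I, ∃ j ∈ Ideal.map (Polynomial.C) (Ideal.comap (Polynomial.C) I),
        x = (X - C (algebraMap k S lam)) * i + j) :
    Module.Flat (Polynomial k) (Polynomial S ⧸ I) := by
  have := isTorsionFree_quotient fun a _ => mem_of_monic_mul_mem (monic_X_sub_C _) (h a)
  infer_instance
end

section
/- Let B be a commutative ring, R = B[X] graded by the degree in X, J ⊆ R a homogeneous ideal generated in degrees ≤ d, and ∂ ∈ R an element of degree strictly less than d such that for every b ∈ B with b·X^d ∈ J one has b·∂ ∈ J. Then for every r ∈ R, r·(X^d − ∂) ∈ J implies both r·X^d ∈ J and r·∂ ∈ J. -/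
open Polynomial

/-- Let `B` be a commutative ring and `R = B[X]`, graded by the degree in `X`.  Let
`J ⊆ R` be a homogeneous ideal (each `X`-homogeneous component of a member lies in `J`)
generated by homogeneous elements of degree at most `d`, and let `q ∈ R` be an element of
degree strictly less than `d` such that `b·X^d ∈ J` implies `b·q ∈ J` for every `b ∈ B`.
Then for every `r ∈ R`, `r·(X^d − q) ∈ J` implies `r·X^d ∈ J` and `r·q ∈ J`. -/
theorem mem_of_mul_sub_mem (B : Type*) [CommRing B] (d : ℕ) (J : Ideal (Polynomial B))
    (hhom : ∀ f ∈ J, ∀ m : ℕ, (C (f.coeff m) * X ^ m : Polynomial B) ∈ J)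
    (hgen : ∃ G : Set (Polynomial B),
      (∀ g ∈ G, ∃ (b : B) (m : ℕ), m ≤ d ∧ g = C b * X ^ m) ∧ J = Ideal.span G)
    (q : Polynomial B) (hdeg : q.degree < (d : WithBot ℕ))
    (hcond : ∀ b : B, (C b * X ^ d : Polynomial B) ∈ J → C b * q ∈ J) :
    ∀ r : Polynomial B, r * (X ^ d - q) ∈ J → r * X ^ d ∈ J ∧ r * q ∈ J := by
  obtain ⟨G, hG, rfl⟩ := hgen
  -- Key lemma: leading coefficients of members (in degrees ≥ d) times X^d lie in J
  have hA : ∀ f ∈ Ideal.span G, ∀ (p : Polynomial B) (k : ℕ), d ≤ k →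
      (C ((p * f).coeff k) * X ^ d : Polynomial B) ∈ Ideal.span G := by
    intro f hf
    refine Submodule.span_induction ?_ ?_ ?_ ?_ hf
    · intro g hg p k hk
      obtain ⟨c, m, hm, rfl⟩ := hG g hg
      have hmk : m ≤ k := hm.trans hk
      have h1 : (p * (C c * X ^ m)).coeff k = p.coeff (k - m) * c := by
        rw [← mul_assoc, coeff_mul_X_pow', if_pos hmk, coeff_mul_C]
      rw [h1]
      have h2 : (C (p.coeff (k - m) * c) * X ^ d : Polynomial B)
          = (C (p.coeff (k - m)) * X ^ (d - m)) * (C c * X ^ m) := by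
        conv_lhs => rw [C_mul, ← Nat.sub_add_cancel hm, pow_add]
        ring
      rw [h2]
      exact Ideal.mul_mem_left _ _ (Ideal.subset_span hg)
    · intro p k hk
      simp
    · intro x y _ _ hx hy p k hk
      have : (p * (x + y)).coeff k = (p * x).coeff k + (p * y).coeff k := by
        rw [mul_add, coeff_add]
      rw [this, C_add, add_mul]
      exact Ideal.add_mem _ (hx p k hk) (hy p k hk)
    · intro a x _ hx p k hk
      have : p * (a • x) = (p * a) * x := by
        rw [smul_eq_mul]; ring
      rw [this]
      exact hx (p * a) k hk
  -- coefficient of r*(X^d - q) at natDegree r + d is the leading coefficient of r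
  have hcoef : ∀ r : Polynomial B,
      (r * (X ^ d - q)).coeff (r.natDegree + d) = r.coeff r.natDegree := by
    intro r
    have hq : (r * q).coeff (r.natDegree + d) = 0 := by
      by_cases hq0 : q = 0
      · simp [hq0]
      · apply coeff_eq_zero_of_natDegree_lt
        have h1 : q.natDegree < d := (natDegree_lt_iff_degree_lt hq0).mpr hdeg
        calc (r * q).natDegree ≤ r.natDegree + q.natDegree := natDegree_mul_le
          _ < r.natDegree + d := by omega
    rw [mul_sub, coeff_sub, hq, sub_zero, coeff_mul_X_pow]
  have step : ∀ r : Polynomial B, r * (X ^ d - q) ∈ Ideal.span G →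
      (C (r.coeff r.natDegree) * X ^ d : Polynomial B) ∈ Ideal.span G := by
    intro r hmem
    have h := hA _ hmem 1 (r.natDegree + d) (Nat.le_add_left _ _)
    rwa [one_mul, hcoef r] at h
  have main : ∀ n (r : Polynomial B), r.natDegree ≤ n →
      r * (X ^ d - q) ∈ Ideal.span G → r * X ^ d ∈ Ideal.span G := by
    intro n
    induction n with
    | zero =>
      intro r hr hmem
      have hrC : r = C (r.coeff 0) := r.eq_C_of_natDegree_le_zero hr
      have := step r hmem
      rw [Nat.eq_zero_of_le_zero hr] at this
      rw [hrC] at *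
      simpa using this
    | succ n ih =>
      intro r hr hmem
      by_cases h0 : r.natDegree = 0
      · have hrC : r = C (r.coeff 0) := r.eq_C_of_natDegree_le_zero h0.le
        have := step r hmem
        rw [h0] at this
        rw [hrC] at *
        simpa using this
      · set m := r.natDegree with hm
        set b := r.coeff m with hb
        have hbX : (C b * X ^ d : Polynomial B) ∈ Ideal.span G := step r hmem
        have hbq : (C b * q : Polynomial B) ∈ Ideal.span G := hcond b hbX
        have hbXm : (C b * X ^ (m + d) : Polynomial B) ∈ Ideal.span G := by
          have : (C b * X ^ (m + d) : Polynomial B) = X ^ m * (C b * X ^ d) := by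
            rw [pow_add]; ring
          rw [this]
          exact Ideal.mul_mem_left _ _ hbX
        have herl : r.eraseLead = r - C b * X ^ m := by
          have := r.eraseLead_add_C_mul_X_pow
          rw [leadingCoeff] at this
          linear_combination this
        have hrem : r.eraseLead * (X ^ d - q) ∈ Ideal.span G := by
          have heq : r.eraseLead * (X ^ d - q)
              = r * (X ^ d - q) - (C b * X ^ (m + d) - X ^ m * (C b * q)) := by
            rw [herl, pow_add]; ring
          rw [heq]
          exact Ideal.sub_mem _ hmem
            (Ideal.sub_mem _ hbXm (Ideal.mul_mem_left _ _ hbq))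
        have hdeg' : r.eraseLead.natDegree ≤ n := by
          have := r.eraseLead_natDegree_le
          omega
        have h1 := ih r.eraseLead hdeg' hrem
        have heq2 : r * X ^ d = r.eraseLead * X ^ d + C b * X ^ (m + d) := by
          rw [herl, pow_add]; ring
        rw [heq2]
        exact Ideal.add_mem _ h1 hbXm
  intro r hmem
  have h1 : r * X ^ d ∈ Ideal.span G := main r.natDegree r le_rfl hmem
  refine ⟨h1, ?_⟩
  have : r * q = r * X ^ d - r * (X ^ d - q) := by ring
  rw [this]
  exact Ideal.sub_mem _ h1 hmem
end
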